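/- For every sequence x of length n ≥ 1, |NG(x)| ≥ n − 1; that is, every Cartesian tree of size n has at least n−1 neighbors in the swap graph. -/
import Mathlib


/-- A sequence of length `n`: a function `ℕ → ℤ` injective on positions `1,…,n`. -/
def IsSeq (n : ℕ) (x : ℕ → ℤ) : Prop := Set.InjOn x (Set.Icc 1 n)

/-- Parent-distance table: `fwdPD x i = i - max{ j | 1 ≤ j < i, x j < x i }` if such `j`
exists, `0` otherwise. -/
def fwdPD (x : ℕ → ℤ) (i : ℕ) : ℕ :=
  if h : ((Finset.Ico 1 i).filter (fun j => x j < x i)).Nonempty then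
    i - ((Finset.Ico 1 i).filter (fun j => x j < x i)).max' h
  else 0

/-- Reverse parent-distance table: `revPD n x i = min{ j | i < j ≤ n, x j < x i } - i` if
such `j` exists, `0` otherwise. -/
def revPD (n : ℕ) (x : ℕ → ℤ) (i : ℕ) : ℕ :=
  if h : ((Finset.Ioc i n).filter (fun j => x j < x i)).Nonempty then
    ((Finset.Ioc i n).filter (fun j => x j < x i)).min' h - i
  else 0

/-- The swap `τ(x,i)`: exchanges positions `i` and `i+1`. -/
def swapSeq (x : ℕ → ℤ) (i : ℕ) : ℕ → ℤ :=
  fun j => if j = i then x (i + 1) else if j = i + 1 then x i else x j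

/-- The parent-distance table of a sequence of length `n`, as a function on `Fin n`
(position `k : Fin n` corresponds to index `k+1 ∈ {1,…,n}`). -/
def PDvec (n : ℕ) (x : ℕ → ℤ) : Fin n → ℕ := fun k => fwdPD x (k.1 + 1)

/-- `NGat n x i` is the set of parent-distance tables obtained by a swap at position `i`
(`1 ≤ i ≤ n-1`) from some sequence `z` having the same Cartesian tree (i.e. the same
parent-distance table) as `x`; it is empty for `i` out of range. -/
def NGat (n : ℕ) (x : ℕ → ℤ) (i : ℕ) : Set (Fin n → ℕ) :=
  {P | 1 ≤ i ∧ i + 1 ≤ n ∧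
    ∃ z, IsSeq n z ∧ PDvec n z = PDvec n x ∧ P = PDvec n (swapSeq z i)}

/-- The neighborhood of (the Cartesian tree of) `x` in the swap graph. -/
def NG (n : ℕ) (x : ℕ → ℤ) : Set (Fin n → ℕ) := ⋃ i, NGat n x i

lemma fwdPD_congr {x y : ℕ → ℤ} {m : ℕ} (h : ∀ j ≤ m, x j = y j) :
    fwdPD x m = fwdPD y m := by
  unfold fwdPD
  have hs : (Finset.Ico 1 m).filter (fun j => x j < x m)
      = (Finset.Ico 1 m).filter (fun j => y j < y m) := by
    apply Finset.filter_congr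
    intro j hj
    rw [Finset.mem_Ico] at hj
    rw [h j (le_of_lt hj.2), h m le_rfl]
  rw [hs]

lemma fwdPD_le (x : ℕ → ℤ) (m : ℕ) : fwdPD x m ≤ m := by
  unfold fwdPD
  split
  · exact Nat.sub_le _ _
  · exact Nat.zero_le _

lemma fwdPD_eq_one {x : ℕ → ℤ} {m : ℕ} (hm : 1 ≤ m) (h : x m < x (m + 1)) :
    fwdPD x (m + 1) = 1 := by
  unfold fwdPD
  have hmem : m ∈ (Finset.Ico 1 (m+1)).filter (fun j => x j < x (m+1)) := by
    simp [Finset.mem_filter, Finset.mem_Ico, hm, h]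
  have hne : ((Finset.Ico 1 (m+1)).filter (fun j => x j < x (m+1))).Nonempty := ⟨m, hmem⟩
  rw [dif_pos hne]
  have hmax : ((Finset.Ico 1 (m+1)).filter (fun j => x j < x (m+1))).max' hne = m := by
    apply le_antisymm
    · have h1 := Finset.max'_mem _ hne
      rw [Finset.mem_filter, Finset.mem_Ico] at h1
      omega
    · exact Finset.le_max' _ m hmem
  omega

lemma fwdPD_ne_one {x : ℕ → ℤ} {m : ℕ} (h : ¬ x m < x (m + 1)) :
    fwdPD x (m + 1) ≠ 1 := by
  unfold fwdPD
  split
  · rename_i hne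
    have h1 := Finset.max'_mem _ hne
    rw [Finset.mem_filter, Finset.mem_Ico] at h1
    have h2 : ((Finset.Ico 1 (m+1)).filter (fun j => x j < x (m+1))).max' hne ≠ m := by
      intro he
      rw [he] at h1
      exact h h1.2
    omega
  · omega

theorem stmt17 (n : ℕ) (hn : 1 ≤ n) (x : ℕ → ℤ) (hx : IsSeq n x) :
    n - 1 ≤ (NG n x).ncard := by
  classical
  set f : ℕ → (Fin n → ℕ) := fun i => PDvec n (swapSeq x i) with hf
  -- swapped sequence values
  have hswap : ∀ i t : ℕ, t ≠ i → t ≠ i + 1 → swapSeq x i t = x t := by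
    intro i t h1 h2; simp [swapSeq, h1, h2]
  have hswap1 : ∀ i : ℕ, swapSeq x i i = x (i + 1) := by
    intro i; simp [swapSeq]
  have hswap2 : ∀ i : ℕ, swapSeq x i (i + 1) = x i := by
    intro i; simp [swapSeq]
  -- distinct values
  have hdist : ∀ s t : ℕ, 1 ≤ s → t ≤ n → s < t → x s ≠ x t := by
    intro s t h1 h2 h3 he
    have := hx (Set.mem_Icc.mpr ⟨h1, by omega⟩) (Set.mem_Icc.mpr ⟨by omega, h2⟩) he
    omega
  -- key: injectivity
  have key : ∀ i j : ℕ, 1 ≤ i → i < j → j < n → f i ≠ f j := by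
    intro i j hi1 hij hjn
    by_cases hadj : j = i + 1
    · -- adjacent case: compare coordinates i and i+1 (positions i+1, i+2)
      subst hadj
      have hi2n : i + 2 ≤ n := by omega
      have hab : x i ≠ x (i + 1) := hdist i (i+1) hi1 (by omega) (by omega)
      have hac : x i ≠ x (i + 2) := hdist i (i+2) hi1 (by omega) (by omega)
      have hbc : x (i + 1) ≠ x (i + 2) := hdist (i+1) (i+2) (by omega) (by omega) (by omega)
      have hui : swapSeq x i i = x (i+1) := hswap1 i
      have hui1 : swapSeq x i (i+1) = x i := hswap2 i
      have hui2 : swapSeq x i (i+2) = x (i+2) := hswap i (i+2) (by omega) (by omega)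
      have hvi : swapSeq x (i+1) i = x i := hswap (i+1) i (by omega) (by omega)
      have hvi1 : swapSeq x (i+1) (i+1) = x (i+2) := hswap1 (i+1)
      have hvi2 : swapSeq x (i+1) (i+2) = x (i+1) := hswap2 (i+1)
      intro he
      rcases hab.lt_or_gt with h1 | h1
      · rcases hac.lt_or_gt with h2 | h2
        · -- a<b, a<c : coordinate at position i+1
          have e1 : fwdPD (swapSeq x (i+1)) (i + 1) = 1 := by
            apply fwdPD_eq_one hi1
            rw [hvi, hvi1]; exact h2
          have e2 : fwdPD (swapSeq x i) (i + 1) ≠ 1 := by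
            apply fwdPD_ne_one
            rw [hui, hui1]; omega
          have := congrFun he ⟨i, by omega⟩
          simp only [hf, PDvec] at this
          exact e2 (this.trans e1)
        · -- a<b, c<a : coordinate at position i+2
          have e1 : fwdPD (swapSeq x (i+1)) (i + 1 + 1) = 1 := by
            apply fwdPD_eq_one (by omega)
            rw [show i+1+1 = i+2 from rfl, hvi1, hvi2]; omega
          have e2 : fwdPD (swapSeq x i) (i + 1 + 1) ≠ 1 := by
            apply fwdPD_ne_one
            rw [show i+1+1 = i+2 from rfl, hui1, hui2]; omega
          have := congrFun he ⟨i + 1, by omega⟩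
          simp only [hf, PDvec] at this
          exact e2 (this.trans e1)
      · rcases hac.lt_or_gt with h2 | h2
        · -- b<a, a<c : coordinate at position i+2
          have e1 : fwdPD (swapSeq x i) (i + 1 + 1) = 1 := by
            apply fwdPD_eq_one (by omega)
            rw [show i+1+1 = i+2 from rfl, hui1, hui2]; exact h2
          have e2 : fwdPD (swapSeq x (i+1)) (i + 1 + 1) ≠ 1 := by
            apply fwdPD_ne_one
            rw [show i+1+1 = i+2 from rfl, hvi1, hvi2]; omega
          have := congrFun he ⟨i + 1, by omega⟩
          simp only [hf, PDvec] at this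
          exact e2 (this.symm.trans e1)
        · -- b<a, c<a : coordinate at position i+1
          have e1 : fwdPD (swapSeq x i) (i + 1) = 1 := by
            apply fwdPD_eq_one hi1
            rw [hui, hui1]; exact h1
          have e2 : fwdPD (swapSeq x (i+1)) (i + 1) ≠ 1 := by
            apply fwdPD_ne_one
            rw [hvi, hvi1]; omega
          have := congrFun he ⟨i, by omega⟩
          simp only [hf, PDvec] at this
          exact e2 (this.symm.trans e1)
    · -- non-adjacent: j ≥ i + 2, compare at position i+1
      have hji : i + 2 ≤ j := by omega
      have hab : x i ≠ x (i + 1) := hdist i (i+1) hi1 (by omega) (by omega)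
      have hfj : fwdPD (swapSeq x j) (i + 1) = fwdPD x (i + 1) := by
        apply fwdPD_congr
        intro t ht
        exact hswap j t (by omega) (by omega)
      have hui : swapSeq x i i = x (i+1) := hswap1 i
      have hui1 : swapSeq x i (i+1) = x i := hswap2 i
      intro he
      have hc := congrFun he ⟨i, by omega⟩
      simp only [hf, PDvec] at hc
      rw [hfj] at hc
      rcases hab.lt_or_gt with h1 | h1
      · have e1 : fwdPD x (i + 1) = 1 := fwdPD_eq_one hi1 h1
        have e2 : fwdPD (swapSeq x i) (i + 1) ≠ 1 := by
          apply fwdPD_ne_one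
          rw [hui, hui1]; omega
        exact e2 (hc.trans e1)
      · have e1 : fwdPD (swapSeq x i) (i + 1) = 1 := by
          apply fwdPD_eq_one hi1
          rw [hui, hui1]; exact h1
        have e2 : fwdPD x (i + 1) ≠ 1 := fwdPD_ne_one (by omega)
        exact e2 (hc.symm.trans e1)
  have hinj : Set.InjOn f ↑(Finset.Ico 1 n) := by
    intro i hi j hj hij
    simp only [Finset.coe_Ico, Set.mem_Ico] at hi hj
    by_contra hne
    rcases lt_or_gt_of_ne hne with h | h
    · exact key i j hi.1 h hj.2 hij
    · exact key j i hj.1 h hi.2 hij.symm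
  -- the image is inside NG
  have hsub : ↑((Finset.Ico 1 n).image f) ⊆ NG n x := by
    intro P hP
    simp only [Finset.coe_image, Set.mem_image, Finset.mem_coe, Finset.mem_Ico] at hP
    obtain ⟨i, ⟨hia, hib⟩, rfl⟩ := hP
    exact Set.mem_iUnion.mpr ⟨i, hia, by omega, x, hx, rfl, rfl⟩
  -- NG is finite
  have hfin : (NG n x).Finite := by
    apply Set.Finite.subset (Set.Finite.pi (fun _ : Fin n => Set.finite_Iic n))
    intro P hP
    rw [NG, Set.mem_iUnion] at hP
    obtain ⟨i, _, _, z, _, _, rfl⟩ := hP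
    intro k _
    simp only [Set.mem_Iic, PDvec]
    calc fwdPD (swapSeq z i) (k.1 + 1) ≤ k.1 + 1 := fwdPD_le _ _
      _ ≤ n := by omega
  calc n - 1 = (Finset.Ico 1 n).card := by rw [Nat.card_Ico]
    _ = ((Finset.Ico 1 n).image f).card := (Finset.card_image_of_injOn hinj).symm
    _ = (↑((Finset.Ico 1 n).image f) : Set (Fin n → ℕ)).ncard := (Set.ncard_coe_finset _).symm
    _ ≤ (NG n x).ncard := Set.ncard_le_ncard hsub hfin
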